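/- Let x, y > 0 and 0 < p < 1. Set μ = δ_x, ν = p·δ₀ + (1−p)·δ_y, and λ = p·δ₀ + (1−p)·δ_{y(p + x(1−p))}. Then for all z ∈ ℂ⁺: G_λ(z) = G_ν(z) − W_ν(z)²/(z·G_ν(z)−1) + [W_ν(z)²/(z·G_ν(z)−1)²] · G_μ(z·G_ν(z)/(z·G_ν(z)−1)), where W_ν(z) = ∫ √t/(z−t) dν(t) = (1−p)√y/(z−y). (That is, the alternative multiplicative monotone convolution of a Dirac measure with a two-point measure, δ_x ▷̃ (pδ₀+(1−p)δ_y), equals p·δ₀ + (1−p)·δ_{y(p+x(1−p))}; this is the computation underlying the non-associativity of ▷̃.) -/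

import Mathlib

/-!
Both measures are finitely supported, so all transforms involved are rational in `z`:
`G_ν(z) = p/z + (1-p)/(z-y)` and `W_ν(z) = (1-p)√y/(z-y)`. Hence `z G_ν(z) - 1 = (1-p)y/(z-y)`,
and the subordination point `w = z G_ν(z)/(z G_ν(z) - 1)` satisfies
`w - x = (z - y(p + x(1-p)))/((1-p)y)`, so `G_μ(w)` has its pole exactly at the new atom.
-/

open MeasureTheory

/-- The Cauchy transform `G_ρ(z) = ∫ 1/(z−t) dρ(t)` of a measure on `ℝ`. -/
noncomputable def cauchyTransform (ρ : Measure ℝ) (z : ℂ) : ℂ := ∫ t, (z - (t : ℂ))⁻¹ ∂ρ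

/-- The transform `W_ρ(z) = ∫ √t/(z−t) dρ(t)` of a measure on `ℝ`. -/
noncomputable def sqrtCauchyTransform (ρ : Measure ℝ) (z : ℂ) : ℂ :=
  ∫ t, (Real.sqrt t : ℂ) / (z - (t : ℂ)) ∂ρ

theorem integral_two_point {E : Type*} [NormedAddCommGroup E] [NormedSpace ℝ E]
    [CompleteSpace E] {p q : ℝ} (hp : 0 ≤ p) (hq : 0 ≤ q) (a b : ℝ) (f : ℝ → E) :
    ∫ t, f t ∂(ENNReal.ofReal p • Measure.dirac a + ENNReal.ofReal q • Measure.dirac b)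
      = p • f a + q • f b := by
  have hint : ∀ c, Integrable f (Measure.dirac c) := fun c => integrable_dirac enorm_lt_top
  rw [integral_add_measure ((hint a).smul_measure ENNReal.ofReal_ne_top)
      ((hint b).smul_measure ENNReal.ofReal_ne_top),
    integral_smul_measure, integral_smul_measure, integral_dirac, integral_dirac,
    ENNReal.toReal_ofReal hp, ENNReal.toReal_ofReal hq]

theorem cauchyTransform_dirac (a : ℝ) (z : ℂ) :
    cauchyTransform (Measure.dirac a) z = (z - a)⁻¹ :=
  integral_dirac _ a

theorem cauchyTransform_two_point {p q : ℝ} (hp : 0 ≤ p) (hq : 0 ≤ q) (a b : ℝ) (z : ℂ) :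
    cauchyTransform (ENNReal.ofReal p • Measure.dirac a + ENNReal.ofReal q • Measure.dirac b) z
      = p * (z - a)⁻¹ + q * (z - b)⁻¹ := by
  simp only [cauchyTransform, integral_two_point hp hq, Complex.real_smul]

theorem sqrtCauchyTransform_two_point {p q : ℝ} (hp : 0 ≤ p) (hq : 0 ≤ q) (a b : ℝ)
    (z : ℂ) :
    sqrtCauchyTransform
        (ENNReal.ofReal p • Measure.dirac a + ENNReal.ofReal q • Measure.dirac b) z
      = p * Real.sqrt a / (z - a) + q * Real.sqrt b / (z - b) := by
  simp only [sqrtCauchyTransform, integral_two_point hp hq, Complex.real_smul, mul_div_assoc]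

theorem Complex.sub_ofReal_ne_zero_of_im_ne_zero {z : ℂ} (hz : z.im ≠ 0) (r : ℝ) :
    z - r ≠ 0 := by
  intro h
  exact hz (by simpa using congrArg Complex.im h)

section Algebra

variable {K : Type*} [Field K] {p x y s z G W : K}

theorem mul_two_point_sub_one (hz : z ≠ 0) (hzy : z - y ≠ 0)
    (hG : G = p * z⁻¹ + (1 - p) * (z - y)⁻¹) :
    z * G - 1 = (1 - p) * y / (z - y) := by
  rw [hG]
  field_simp
  ring

theorem two_point_subordination_sub (hz : z ≠ 0) (hzy : z - y ≠ 0) (hp : 1 - p ≠ 0)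
    (hy : y ≠ 0) (hG : G = p * z⁻¹ + (1 - p) * (z - y)⁻¹) :
    z * G / (z * G - 1) - x = (z - y * (p + x * (1 - p))) / ((1 - p) * y) := by
  have hD := mul_two_point_sub_one hz hzy hG
  rw [div_sub' (hD ▸ div_ne_zero (mul_ne_zero hp hy) hzy), hD, hG]
  field_simp
  ring

theorem two_point_monotone_identity (hz : z ≠ 0) (hzy : z - y ≠ 0) (hp : 1 - p ≠ 0)
    (hy : y ≠ 0) (hs : s ^ 2 = y)
    (hG : G = p * z⁻¹ + (1 - p) * (z - y)⁻¹) (hW : W = (1 - p) * s / (z - y)) :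
    p * z⁻¹ + (1 - p) * (z - y * (p + x * (1 - p)))⁻¹
      = G - W ^ 2 / (z * G - 1) + W ^ 2 / (z * G - 1) ^ 2 * (z * G / (z * G - 1) - x)⁻¹ := by
  have hW2 : W ^ 2 = (1 - p) ^ 2 * y / (z - y) ^ 2 := by
    rw [hW, div_pow, mul_pow, hs]
  rw [two_point_subordination_sub hz hzy hp hy hG, mul_two_point_sub_one hz hzy hG, hW2, inv_div,
    div_eq_mul_inv _ (z - y * (p + x * (1 - p))), hG]
  -- The identity holds for every value of this inverse, even the junk one at `z = y(p+x(1-p))`.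
  generalize (z - y * (p + x * (1 - p)))⁻¹ = u
  field_simp
  ring

end Algebra

theorem monotone_mult_alt_convolution_dirac_two_point
    (x y p : ℝ) (hy : 0 < y) (hp0 : 0 < p) (hp1 : p < 1) :
    ∀ z : ℂ, 0 < z.im →
      (sqrtCauchyTransform (ENNReal.ofReal p • Measure.dirac 0 +
          ENNReal.ofReal (1 - p) • Measure.dirac y) z
        = ((1 - p : ℝ) : ℂ) * (Real.sqrt y : ℂ) / (z - (y : ℂ))) ∧
      cauchyTransform (ENNReal.ofReal p • Measure.dirac 0 +
          ENNReal.ofReal (1 - p) • Measure.dirac (y * (p + x * (1 - p)))) z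
        = cauchyTransform (ENNReal.ofReal p • Measure.dirac 0 +
              ENNReal.ofReal (1 - p) • Measure.dirac y) z
          - (sqrtCauchyTransform (ENNReal.ofReal p • Measure.dirac 0 +
                ENNReal.ofReal (1 - p) • Measure.dirac y) z) ^ 2 /
              (z * cauchyTransform (ENNReal.ofReal p • Measure.dirac 0 +
                ENNReal.ofReal (1 - p) • Measure.dirac y) z - 1)
          + (sqrtCauchyTransform (ENNReal.ofReal p • Measure.dirac 0 +
                ENNReal.ofReal (1 - p) • Measure.dirac y) z) ^ 2 /
              (z * cauchyTransform (ENNReal.ofReal p • Measure.dirac 0 +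
                ENNReal.ofReal (1 - p) • Measure.dirac y) z - 1) ^ 2 *
              cauchyTransform (Measure.dirac x)
                (z * cauchyTransform (ENNReal.ofReal p • Measure.dirac 0 +
                    ENNReal.ofReal (1 - p) • Measure.dirac y) z /
                  (z * cauchyTransform (ENNReal.ofReal p • Measure.dirac 0 +
                    ENNReal.ofReal (1 - p) • Measure.dirac y) z - 1)) := by
  intro z hz
  set ν := ENNReal.ofReal p • Measure.dirac 0 + ENNReal.ofReal (1 - p) • Measure.dirac y
  have hq : 0 ≤ 1 - p := by linarith
  have hW :
      sqrtCauchyTransform ν z = ((1 - p : ℝ) : ℂ) * (Real.sqrt y : ℂ) / (z - (y : ℂ)) := by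
    simpa using sqrtCauchyTransform_two_point hp0.le hq 0 y z
  refine ⟨hW, ?_⟩
  have hG : cauchyTransform ν z = p * z⁻¹ + (1 - p) * (z - y)⁻¹ := by
    simpa using cauchyTransform_two_point hp0.le hq 0 y z
  have hzr := Complex.sub_ofReal_ne_zero_of_im_ne_zero hz.ne'
  push_cast at hW
  rw [cauchyTransform_two_point hp0.le hq, cauchyTransform_dirac]
  push_cast
  simpa using two_point_monotone_identity (by simpa using hzr 0) (hzr y)
    (by exact_mod_cast (sub_pos.2 hp1).ne')
    (by exact_mod_cast hy.ne') (by rw [← Complex.ofReal_pow, Real.sq_sqrt hy.le]) hG hW
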